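/- Let $(X_j, X_k)$ and independent copies thereof (four independent copies in total) be jointly Gaussian, each coordinate standard normal, with pairwise correlations $\sigma_{jl}, \sigma_{lm}, \sigma_{mk}, \sigma_{kj} \in [-1,1]$ between the relevant coordinates. Define $V(\sigma_{jl},\sigma_{lm},\sigma_{mk},\sigma_{kj}) = \int e^{-(t_1^2+t_2^2+t_3^2+t_4^2)}(1-e^{-\sigma_{jl}t_1t_2})(1-e^{-\sigma_{lm}t_2t_4})(1-e^{-\sigma_{mk}t_3t_4})(1-e^{-\sigma_{kj}t_1t_3})\,w(t_1)w(t_2)w(t_3)w(t_4)\,dt_1dt_2dt_3dt_4$ with $w(t)=1/(\pi t^2)$. Then $V(\sigma_{jl},\sigma_{lm},\sigma_{mk},\sigma_{kj}) \leq |\sigma_{jl}\sigma_{lm}\sigma_{mk}\sigma_{kj}|\, V(1,1,1,1)$, and $V(1,1,1,1) < \infty$. -/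

import Mathlib

/-!
Write `1 - e^{-x} = (1 - cosh x) + sinh x`. Flipping the signs of the coordinates `tᵢ` preserves
Lebesgue measure and multiplies the parameter of the edge `{i, j}` of the cycle `0 - 1 - 3 - 2 - 0`
by `vᵢ vⱼ`. Averaging over the eight resulting sign patterns of the edges kills every mixed term of
the product of the four factors, leaving `∏ (1 - cosh) + ∏ sinh`: all even or all odd. Comparing
power series termwise gives `cosh (σ u) - 1 ≤ |σ| (cosh u - 1)` and `|sinh (σ u)| ≤ |σ| |sinh u|`,
and at `σ = 1` the product of the four sinh's is nonnegative because the product of their arguments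
is a square. Hence the symmetrized integrand is at most `|σ_{jl} σ_{lm} σ_{mk} σ_{kj}|` times its
value at `(1, 1, 1, 1)`.

For integrability, the square of each edge factor `e^{-(x²+y²)/2} (1 - e^{-σxy}) / (xy)` is at most
`5 (1 + x²)⁻¹ (1 + y²)⁻¹`; every vertex of the cycle lies on two edges, so the integrand is
dominated by a multiple of `∏ (1 + tᵢ²)⁻¹`.
-/

open MeasureTheory Real

/-- The integrand of `V(σ_{jl}, σ_{lm}, σ_{mk}, σ_{kj})` with weight `w(t) = 1/(π t²)`. -/
noncomputable def Vintegrand (a b c d : ℝ) (t : Fin 4 → ℝ) : ℝ :=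
  Real.exp (-(t 0 ^ 2 + t 1 ^ 2 + t 2 ^ 2 + t 3 ^ 2)) *
    ((1 - Real.exp (-(a * t 0 * t 1))) * (1 - Real.exp (-(b * t 1 * t 3))) *
      (1 - Real.exp (-(c * t 2 * t 3))) * (1 - Real.exp (-(d * t 0 * t 2)))) *
    (1 / (Real.pi * t 0 ^ 2) * (1 / (Real.pi * t 1 ^ 2)) *
      (1 / (Real.pi * t 2 ^ 2)) * (1 / (Real.pi * t 3 ^ 2)))

/-- `V(σ_{jl}, σ_{lm}, σ_{mk}, σ_{kj})` for Gaussian covariates. -/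
noncomputable def Vfun (a b c d : ℝ) : ℝ :=
  ∫ t : Fin 4 → ℝ, Vintegrand a b c d t

open scoped Nat

section SignFlip

variable {ι : Type*}

noncomputable def signFlip (v : ι → ℝ) (hv : ∀ i, |v i| = 1) : (ι → ℝ) ≃ᵐ (ι → ℝ) :=
  MeasurableEquiv.piCongrRight fun i =>
    MeasurableEquiv.mulLeft₀ (v i) (abs_ne_zero.mp (by simp [hv i]))

@[simp]
lemma signFlip_apply (v : ι → ℝ) (hv : ∀ i, |v i| = 1) (t : ι → ℝ) (i : ι) :
    signFlip v hv t i = v i * t i := rfl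

lemma measurePreserving_signFlip [Fintype ι] (v : ι → ℝ) (hv : ∀ i, |v i| = 1) :
    MeasurePreserving (signFlip v hv) volume volume := by
  refine volume_preserving_pi fun i =>
    (⟨measurable_const_mul (v i), ?_⟩ : MeasurePreserving (v i * ·) volume volume)
  rw [Real.map_volume_mul_left (abs_ne_zero.mp (by simp [hv i])), abs_inv, hv i]
  simp

end SignFlip

lemma integral_mul_card_eq_integral_sum_comp {α ι : Type*} [MeasurableSpace α] {μ : Measure α}
    [Fintype ι] {g : ι → α ≃ᵐ α} (hg : ∀ i, MeasurePreserving (g i) μ μ) {f : α → ℝ}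
    (hf : Integrable f μ) :
    Fintype.card ι * ∫ x, f x ∂μ = ∫ x, ∑ i, f (g i x) ∂μ := by
  have hfg (i : ι) : Integrable (fun x => f (g i x)) μ :=
    ((hg i).integrable_comp_emb (g i).measurableEmbedding).mpr hf
  rw [integral_finsetSum _ fun i _ => hfg i]
  simp [(hg _).integral_comp']

lemma sinh_mul_le_mul_sinh {c x : ℝ} (hc₀ : 0 ≤ c) (hc₁ : c ≤ 1) (hx : 0 ≤ x) :
    sinh (c * x) ≤ c * sinh x := by
  refine hasSum_le (fun n => ?_) (hasSum_sinh (c * x)) ((hasSum_sinh x).mul_left c)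
  rw [mul_pow, mul_div_assoc]
  gcongr
  exact pow_le_of_le_one hc₀ hc₁ (by omega)

lemma abs_sinh_mul_le {σ : ℝ} (hσ : |σ| ≤ 1) (u : ℝ) : |sinh (σ * u)| ≤ |σ| * |sinh u| := by
  rw [abs_sinh, abs_sinh, abs_mul]
  exact sinh_mul_le_mul_sinh (abs_nonneg σ) hσ (abs_nonneg u)

lemma cosh_mul_sub_one_le {σ : ℝ} (hσ : |σ| ≤ 1) (u : ℝ) :
    cosh (σ * u) - 1 ≤ |σ| * (cosh u - 1) := by
  have hsum : HasSum (fun n => (if n = 0 then 1 - |σ| else 0) + |σ| * (u ^ (2 * n) / (2 * n)!))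
      (1 - |σ| + |σ| * cosh u) :=
    (hasSum_ite_eq 0 (1 - |σ|)).add ((hasSum_cosh u).mul_left |σ|)
  have := hasSum_le (fun n => ?_) (hasSum_cosh (σ * u)) hsum
  · linarith
  rcases Nat.eq_zero_or_pos n with rfl | hn
  · simp
  · rw [if_neg hn.ne', zero_add, mul_pow, mul_div_assoc, ← (even_two_mul n).pow_abs σ]
    have : 0 ≤ u ^ (2 * n) := (even_two_mul n).pow_nonneg u
    gcongr
    exact pow_le_of_le_one (abs_nonneg σ) hσ (by omega)

lemma sinh_mul_sinh_nonneg {x y : ℝ} (h : 0 ≤ x * y) : 0 ≤ sinh x * sinh y := by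
  rcases mul_nonneg_iff.mp h with ⟨hx, hy⟩ | ⟨hx, hy⟩
  · exact mul_nonneg (sinh_nonneg_iff.mpr hx) (sinh_nonneg_iff.mpr hy)
  · exact mul_nonneg_of_nonpos_of_nonpos (sinh_nonpos_iff.mpr hx) (sinh_nonpos_iff.mpr hy)

lemma sinh_mul_sinh_nonpos {x y : ℝ} (h : x * y ≤ 0) : sinh x * sinh y ≤ 0 := by
  have := sinh_mul_sinh_nonneg (x := x) (y := -y) (by linarith)
  rwa [sinh_neg, mul_neg, neg_nonneg] at this

lemma sinh_cycle_nonneg (t₀ t₁ t₂ t₃ : ℝ) :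
    0 ≤ sinh (t₀ * t₁) * sinh (t₁ * t₃) * sinh (t₂ * t₃) * sinh (t₀ * t₂) := by
  have key : sinh (t₀ * t₁) * sinh (t₁ * t₃) * sinh (t₂ * t₃) * sinh (t₀ * t₂) =
      (sinh (t₀ * t₁) * sinh (t₂ * t₃)) * (sinh (t₁ * t₃) * sinh (t₀ * t₂)) := by ring
  have e₁ : t₀ * t₁ * (t₂ * t₃) = t₀ * t₁ * t₂ * t₃ := by ring
  have e₂ : t₁ * t₃ * (t₀ * t₂) = t₀ * t₁ * t₂ * t₃ := by ring
  rw [key]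
  rcases le_total 0 (t₀ * t₁ * t₂ * t₃) with h | h
  · exact mul_nonneg (sinh_mul_sinh_nonneg (e₁ ▸ h)) (sinh_mul_sinh_nonneg (e₂ ▸ h))
  · exact mul_nonneg_of_nonpos_of_nonpos (sinh_mul_sinh_nonpos (e₁ ▸ h))
      (sinh_mul_sinh_nonpos (e₂ ▸ h))

noncomputable def cycleBracket (x y z w : ℝ) : ℝ :=
  (1 - cosh x) * (1 - cosh y) * (1 - cosh z) * (1 - cosh w) + sinh x * sinh y * sinh z * sinh w

lemma cycleBracket_mul_le {a b c d : ℝ} (ha : |a| ≤ 1) (hb : |b| ≤ 1) (hc : |c| ≤ 1)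
    (hd : |d| ≤ 1) {s₁ s₂ s₃ s₄ : ℝ} (hs : 0 ≤ sinh s₁ * sinh s₂ * sinh s₃ * sinh s₄) :
    cycleBracket (a * s₁) (b * s₂) (c * s₃) (d * s₄) ≤
      |a * b * c * d| * cycleBracket s₁ s₂ s₃ s₄ := by
  have hcosh_nonneg (x : ℝ) : 0 ≤ cosh x - 1 := sub_nonneg.mpr (one_le_cosh x)
  have hcosh : (cosh (a * s₁) - 1) * (cosh (b * s₂) - 1) * (cosh (c * s₃) - 1) * (cosh (d * s₄) - 1)
      ≤ (|a| * (cosh s₁ - 1)) * (|b| * (cosh s₂ - 1)) * (|c| * (cosh s₃ - 1)) *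
        (|d| * (cosh s₄ - 1)) := by
    gcongr ?_ * ?_ * ?_ * ?_
    all_goals first
      | exact cosh_mul_sub_one_le ‹_› _
      | apply_rules [mul_nonneg, abs_nonneg, hcosh_nonneg]
  have hsinh : sinh (a * s₁) * sinh (b * s₂) * sinh (c * s₃) * sinh (d * s₄)
      ≤ (|a| * |sinh s₁|) * (|b| * |sinh s₂|) * (|c| * |sinh s₃|) * (|d| * |sinh s₄|) := by
    refine (le_abs_self _).trans ?_
    simp only [abs_mul]
    gcongr <;> exact abs_sinh_mul_le ‹_› _
  have habs : |sinh s₁| * |sinh s₂| * |sinh s₃| * |sinh s₄| =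
      sinh s₁ * sinh s₂ * sinh s₃ * sinh s₄ := by
    rw [← abs_mul, ← abs_mul, ← abs_mul, abs_of_nonneg hs]
  simp only [cycleBracket, abs_mul]
  linear_combination hcosh + hsinh + (|a| * |b| * |c| * |d|) * habs

lemma abs_one_sub_exp_neg_le (s : ℝ) : |1 - exp (-s)| ≤ exp |s| - 1 := by
  have hcosh := one_le_cosh s
  rw [cosh_eq] at hcosh
  rw [abs_le]
  constructor
  · linarith [exp_le_exp.mpr (neg_le_abs s)]
  · linarith [exp_le_exp.mpr (le_abs_self s)]

lemma exp_mul_one_sub_exp_sq_mul_le {σ : ℝ} (hσ : |σ| ≤ 1) (x y : ℝ) :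
    exp (-(x ^ 2 + y ^ 2)) * (1 - exp (-(σ * x * y))) ^ 2 * ((1 + x ^ 2) * (1 + y ^ 2))
      ≤ 5 * (x * y) ^ 2 := by
  set p := |x * y| with hp_def
  set u := |x| - |y|
  have hp : 0 ≤ p := abs_nonneg _
  have hsq : x ^ 2 + y ^ 2 = u ^ 2 + 2 * p := by
    rw [hp_def, abs_mul, ← sq_abs x, ← sq_abs y]; ring
  have hprod : (1 + x ^ 2) * (1 + y ^ 2) = (1 + p) ^ 2 + u ^ 2 := by
    rw [hp_def, abs_mul, ← sq_abs x, ← sq_abs y]; ring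
  have hexp : exp (-(x ^ 2 + y ^ 2)) = exp (-u ^ 2) * exp (-p) ^ 2 := by
    rw [hsq, sq (exp (-p)), ← exp_add, ← exp_add]; congr 1; ring
  set r := exp (-p) * |1 - exp (-(σ * x * y))|
  have hr : r ≤ 1 - exp (-p) := by
    have harg : |σ * x * y| ≤ p := by
      rw [mul_assoc, abs_mul]; exact mul_le_of_le_one_left hp hσ
    calc r ≤ exp (-p) * (exp p - 1) :=
          mul_le_mul_of_nonneg_left ((abs_one_sub_exp_neg_le _).trans (by gcongr)) (exp_pos _).le
      _ = 1 - exp (-p) := by rw [mul_sub, ← exp_add]; simp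
  have hrp : r ≤ p := hr.trans (by linarith [add_one_le_exp (-p)])
  have hr1 : r * (1 + p) ≤ 2 * p := by nlinarith [exp_pos (-p)]
  have hu : u ^ 2 * exp (-u ^ 2) ≤ 1 := by
    rw [exp_neg, ← div_eq_mul_inv, div_le_one (exp_pos _)]
    linarith [add_one_le_exp (u ^ 2)]
  calc exp (-(x ^ 2 + y ^ 2)) * (1 - exp (-(σ * x * y))) ^ 2 * ((1 + x ^ 2) * (1 + y ^ 2))
      = exp (-u ^ 2) * (r * (1 + p)) ^ 2 + r ^ 2 * (u ^ 2 * exp (-u ^ 2)) := by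
        rw [hexp, hprod, ← sq_abs (1 - _)]; ring
    _ ≤ 1 * (2 * p) ^ 2 + p ^ 2 * 1 := by
        gcongr
        exact exp_le_one_iff.mpr (by nlinarith)
    _ = 5 * (x * y) ^ 2 := by linear_combination 5 * sq_abs (x * y)

noncomputable def edgeFactorSq (σ x y : ℝ) : ℝ :=
  exp (-(x ^ 2 + y ^ 2)) * ((1 - exp (-(σ * x * y))) / (x * y)) ^ 2

lemma edgeFactorSq_le {σ : ℝ} (hσ : |σ| ≤ 1) (x y : ℝ) :
    edgeFactorSq σ x y ≤ 5 * ((1 + x ^ 2)⁻¹ * (1 + y ^ 2)⁻¹) := by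
  rcases eq_or_ne (x * y) 0 with hxy | hxy
  · simp [edgeFactorSq, hxy]; positivity
  rw [edgeFactorSq, div_pow, ← mul_inv, ← div_eq_mul_inv, ← mul_div_assoc,
    div_le_div_iff₀ (by positivity) (by positivity)]
  linarith [exp_mul_one_sub_exp_sq_mul_le hσ x y]

lemma edgeFactorSq_nonneg (σ x y : ℝ) : 0 ≤ edgeFactorSq σ x y := by
  unfold edgeFactorSq; positivity

lemma Vintegrand_sq (a b c d : ℝ) (t : Fin 4 → ℝ) :
    Vintegrand a b c d t ^ 2 = (π ^ 8)⁻¹ * (edgeFactorSq a (t 0) (t 1) *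
      edgeFactorSq b (t 1) (t 3) * edgeFactorSq c (t 2) (t 3) * edgeFactorSq d (t 0) (t 2)) := by
  have hexp : exp (-(t 0 ^ 2 + t 1 ^ 2 + t 2 ^ 2 + t 3 ^ 2)) ^ 2 = exp (-(t 0 ^ 2 + t 1 ^ 2)) *
      exp (-(t 1 ^ 2 + t 3 ^ 2)) * exp (-(t 2 ^ 2 + t 3 ^ 2)) * exp (-(t 0 ^ 2 + t 2 ^ 2)) := by
    rw [← exp_add, ← exp_add, ← exp_add, sq, ← exp_add]; congr 1; ring
  simp only [Vintegrand, edgeFactorSq]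
  rw [mul_pow, mul_pow, hexp]
  ring

lemma abs_Vintegrand_le {a b c d : ℝ} (ha : |a| ≤ 1) (hb : |b| ≤ 1) (hc : |c| ≤ 1)
    (hd : |d| ≤ 1) (t : Fin 4 → ℝ) :
    |Vintegrand a b c d t| ≤ 25 / π ^ 4 * ∏ i, (1 + t i ^ 2)⁻¹ := by
  refine abs_le_of_sq_le_sq ?_ (by positivity)
  rw [Vintegrand_sq, Fin.prod_univ_four]
  calc (π ^ 8)⁻¹ * (edgeFactorSq a (t 0) (t 1) * edgeFactorSq b (t 1) (t 3) *
        edgeFactorSq c (t 2) (t 3) * edgeFactorSq d (t 0) (t 2))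
      ≤ (π ^ 8)⁻¹ * ((5 * ((1 + t 0 ^ 2)⁻¹ * (1 + t 1 ^ 2)⁻¹)) *
        (5 * ((1 + t 1 ^ 2)⁻¹ * (1 + t 3 ^ 2)⁻¹)) * (5 * ((1 + t 2 ^ 2)⁻¹ * (1 + t 3 ^ 2)⁻¹)) *
        (5 * ((1 + t 0 ^ 2)⁻¹ * (1 + t 2 ^ 2)⁻¹))) := by
        gcongr ?_ * (?_ * ?_ * ?_ * ?_)
        all_goals first
          | exact edgeFactorSq_le ‹_› _ _
          | apply_rules [edgeFactorSq_nonneg, mul_nonneg]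
    _ = (25 / π ^ 4 * ((1 + t 0 ^ 2)⁻¹ * (1 + t 1 ^ 2)⁻¹ * (1 + t 2 ^ 2)⁻¹ *
        (1 + t 3 ^ 2)⁻¹)) ^ 2 := by ring

lemma measurable_Vintegrand (a b c d : ℝ) : Measurable (Vintegrand a b c d) := by
  unfold Vintegrand
  fun_prop

lemma integrable_Vintegrand {a b c d : ℝ} (ha : |a| ≤ 1) (hb : |b| ≤ 1) (hc : |c| ≤ 1)
    (hd : |d| ≤ 1) : Integrable (Vintegrand a b c d) := by
  refine Integrable.mono' ((Integrable.fintype_prod fun _ => integrable_inv_one_add_sq).const_mul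
    (25 / π ^ 4)) (measurable_Vintegrand a b c d).aestronglyMeasurable (ae_of_all _ fun t => ?_)
  exact abs_Vintegrand_le ha hb hc hd t

/-- Vertex signs with `v 0 = 1`; their edge signs `(v₀v₁, v₁v₃, v₂v₃, v₀v₂)` run through all eight
sign vectors with product `1`. -/
def signPattern : Fin 8 → Fin 4 → ℝ :=
  ![![1, 1, 1, 1], ![1, 1, 1, -1], ![1, 1, -1, 1], ![1, 1, -1, -1],
    ![1, -1, 1, 1], ![1, -1, 1, -1], ![1, -1, -1, 1], ![1, -1, -1, -1]]

lemma abs_signPattern (k : Fin 8) (i : Fin 4) : |signPattern k i| = 1 := by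
  fin_cases k <;> fin_cases i <;> simp [signPattern]

noncomputable def VintegrandSymm (a b c d : ℝ) (t : Fin 4 → ℝ) : ℝ :=
  exp (-(t 0 ^ 2 + t 1 ^ 2 + t 2 ^ 2 + t 3 ^ 2)) *
    cycleBracket (a * t 0 * t 1) (b * t 1 * t 3) (c * t 2 * t 3) (d * t 0 * t 2) *
    (1 / (π * t 0 ^ 2) * (1 / (π * t 1 ^ 2)) * (1 / (π * t 2 ^ 2)) * (1 / (π * t 3 ^ 2)))

lemma sum_Vintegrand_signFlip (a b c d : ℝ) (t : Fin 4 → ℝ) :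
    ∑ k, Vintegrand a b c d (signFlip (signPattern k) (abs_signPattern k) t) =
      8 * VintegrandSymm a b c d t := by
  simp only [Vintegrand, VintegrandSymm, cycleBracket, signPattern, Fin.sum_univ_eight,
    signFlip_apply, Fin.isValue, Matrix.cons_val', Matrix.cons_val_zero, Matrix.cons_val_fin_one,
    Matrix.cons_val_one, Matrix.cons_val, one_mul, neg_mul, mul_neg, neg_neg, even_two,
    Even.neg_pow, cosh_eq, sinh_eq]
  ring

lemma integrable_VintegrandSymm {a b c d : ℝ} (ha : |a| ≤ 1) (hb : |b| ≤ 1) (hc : |c| ≤ 1)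
    (hd : |d| ≤ 1) : Integrable (VintegrandSymm a b c d) := by
  have hg (k : Fin 8) := measurePreserving_signFlip (signPattern k) (abs_signPattern k)
  have hf := integrable_Vintegrand ha hb hc hd
  refine ((integrable_finsetSum Finset.univ fun k _ =>
    ((hg k).integrable_comp_emb (signFlip _ _).measurableEmbedding).mpr hf).const_mul 8⁻¹).congr
    (ae_of_all _ fun t => ?_)
  simp only [Function.comp_apply, sum_Vintegrand_signFlip]
  ring

lemma integral_VintegrandSymm {a b c d : ℝ} (ha : |a| ≤ 1) (hb : |b| ≤ 1) (hc : |c| ≤ 1)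
    (hd : |d| ≤ 1) : ∫ t, VintegrandSymm a b c d t = Vfun a b c d := by
  have h := integral_mul_card_eq_integral_sum_comp
    (fun k => measurePreserving_signFlip (signPattern k) (abs_signPattern k))
    (integrable_Vintegrand ha hb hc hd)
  simp only [sum_Vintegrand_signFlip, integral_const_mul, Fintype.card_fin, Nat.cast_ofNat] at h
  rw [Vfun]
  linarith

lemma VintegrandSymm_le {a b c d : ℝ} (ha : |a| ≤ 1) (hb : |b| ≤ 1) (hc : |c| ≤ 1)
    (hd : |d| ≤ 1) (t : Fin 4 → ℝ) :
    VintegrandSymm a b c d t ≤ |a * b * c * d| * VintegrandSymm 1 1 1 1 t := by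
  have h := cycleBracket_mul_le ha hb hc hd (sinh_cycle_nonneg (t 0) (t 1) (t 2) (t 3))
  simp only [VintegrandSymm, one_mul]
  rw [mul_assoc a, mul_assoc b, mul_assoc c, mul_assoc d]
  calc _ ≤ exp (-(t 0 ^ 2 + t 1 ^ 2 + t 2 ^ 2 + t 3 ^ 2)) *
        (|a * b * c * d| * cycleBracket (t 0 * t 1) (t 1 * t 3) (t 2 * t 3) (t 0 * t 2)) *
        (1 / (π * t 0 ^ 2) * (1 / (π * t 1 ^ 2)) * (1 / (π * t 2 ^ 2)) * (1 / (π * t 3 ^ 2))) := by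
        gcongr
    _ = _ := by ring

/-- For correlations in `[-1,1]`:
`V(σ_{jl}, σ_{lm}, σ_{mk}, σ_{kj}) ≤ |σ_{jl}σ_{lm}σ_{mk}σ_{kj}| V(1,1,1,1)` and
`V(1,1,1,1) < ∞`. -/
theorem stmt16 (a b c d : ℝ)
    (ha : a ∈ Set.Icc (-1 : ℝ) 1) (hb : b ∈ Set.Icc (-1 : ℝ) 1)
    (hc : c ∈ Set.Icc (-1 : ℝ) 1) (hd : d ∈ Set.Icc (-1 : ℝ) 1) :
    Vfun a b c d ≤ |a * b * c * d| * Vfun 1 1 1 1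
      ∧ Integrable (Vintegrand 1 1 1 1) (volume : Measure (Fin 4 → ℝ)) := by
  replace ha := abs_le.mpr ha
  replace hb := abs_le.mpr hb
  replace hc := abs_le.mpr hc
  replace hd := abs_le.mpr hd
  have h1 : |(1 : ℝ)| ≤ 1 := abs_one.le
  refine ⟨?_, integrable_Vintegrand h1 h1 h1 h1⟩
  rw [← integral_VintegrandSymm ha hb hc hd, ← integral_VintegrandSymm h1 h1 h1 h1,
    ← integral_const_mul]
  exact integral_mono (integrable_VintegrandSymm ha hb hc hd)
    ((integrable_VintegrandSymm h1 h1 h1 h1).const_mul _) (VintegrandSymm_le ha hb hc hd)
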